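/- Let g ≥ 2 and let δ_1, ..., δ_{[g/2]}, ξ_0, ξ_1, ..., ξ_{[(g−1)/2]} be nonnegative reals. Then with ω² and deg f_*ω given by the Noether and Cornalba–Harris formulas (as in the hyperelliptic setting with q_f = 0), one has ω² − (4(g−1)/g)·deg f_*ω = Σ_{i=1}^{[g/2]} ((4i(g−i) − g)/g)·δ_i + Σ_{j=1}^{[(g−1)/2]} ((2(j+1)(g−j) − 2g)/g)·ξ_j, and every coefficient on the right-hand side is nonnegative; in particular ω² ≥ (4(g−1)/g)·deg f_*ω. -/
import Mathlib


/-- The slope inequality for hyperelliptic semi-stable families with relative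
irregularity `0`: with `ω²` and `deg f_*ω` given by Noether's formula and the
Cornalba–Harris formula, one has the stated identity for
`ω² - (4(g-1)/g)·deg f_*ω`, all the coefficients on the right-hand side are
nonnegative, and in particular `ω² ≥ (4(g-1)/g)·deg f_*ω`. -/
theorem stmt_7 (g : ℕ) (hg : 2 ≤ g)
    (δ ξ : ℕ → ℝ) (hδ : ∀ i, 0 ≤ δ i) (hξ : ∀ j, 0 ≤ ξ j)
    (degf ω2 : ℝ)
    (hCH : degf = (g : ℝ) / (4 * (2 * (g : ℝ) + 1)) * ξ 0
        + ∑ i ∈ Finset.Icc 1 (g / 2), (i : ℝ) * ((g : ℝ) - (i : ℝ)) / (2 * (g : ℝ) + 1) * δ i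
        + ∑ j ∈ Finset.Icc 1 ((g - 1) / 2),
            ((j : ℝ) + 1) * ((g : ℝ) - (j : ℝ)) / (2 * (2 * (g : ℝ) + 1)) * ξ j)
    (hNoether : 12 * degf = ω2 + (ξ 0 + ∑ i ∈ Finset.Icc 1 (g / 2), δ i
        + 2 * ∑ j ∈ Finset.Icc 1 ((g - 1) / 2), ξ j)) :
    (ω2 - 4 * ((g : ℝ) - 1) / (g : ℝ) * degf =
        ∑ i ∈ Finset.Icc 1 (g / 2),
          (4 * (i : ℝ) * ((g : ℝ) - (i : ℝ)) - (g : ℝ)) / (g : ℝ) * δ i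
        + ∑ j ∈ Finset.Icc 1 ((g - 1) / 2),
          (2 * ((j : ℝ) + 1) * ((g : ℝ) - (j : ℝ)) - 2 * (g : ℝ)) / (g : ℝ) * ξ j) ∧
    (∀ i ∈ Finset.Icc 1 (g / 2),
        0 ≤ (4 * (i : ℝ) * ((g : ℝ) - (i : ℝ)) - (g : ℝ)) / (g : ℝ)) ∧
    (∀ j ∈ Finset.Icc 1 ((g - 1) / 2),
        0 ≤ (2 * ((j : ℝ) + 1) * ((g : ℝ) - (j : ℝ)) - 2 * (g : ℝ)) / (g : ℝ)) ∧
    4 * ((g : ℝ) - 1) / (g : ℝ) * degf ≤ ω2 := by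
  have hg0 : (0 : ℝ) < (g : ℝ) := by positivity
  have hg0' : (g : ℝ) ≠ 0 := ne_of_gt hg0
  have h2g1 : 2 * (g : ℝ) + 1 ≠ 0 := by positivity
  set c : ℝ := 4 * ((g : ℝ) - 1) / (g : ℝ) with hc
  -- key termwise identities
  have key1 : (12 - c) * ((g : ℝ) / (4 * (2 * (g : ℝ) + 1)) * ξ 0) = ξ 0 := by
    rw [hc]; field_simp; ring
  have key2 : (12 - c) *
      (∑ i ∈ Finset.Icc 1 (g / 2), (i : ℝ) * ((g : ℝ) - (i : ℝ)) / (2 * (g : ℝ) + 1) * δ i)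
      = (∑ i ∈ Finset.Icc 1 (g / 2), δ i)
        + ∑ i ∈ Finset.Icc 1 (g / 2),
            (4 * (i : ℝ) * ((g : ℝ) - (i : ℝ)) - (g : ℝ)) / (g : ℝ) * δ i := by
    rw [Finset.mul_sum, ← Finset.sum_add_distrib]
    refine Finset.sum_congr rfl fun i _ => ?_
    rw [hc]; field_simp; ring
  have key3 : (12 - c) *
      (∑ j ∈ Finset.Icc 1 ((g - 1) / 2),
          ((j : ℝ) + 1) * ((g : ℝ) - (j : ℝ)) / (2 * (2 * (g : ℝ) + 1)) * ξ j)
      = 2 * (∑ j ∈ Finset.Icc 1 ((g - 1) / 2), ξ j)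
        + ∑ j ∈ Finset.Icc 1 ((g - 1) / 2),
            (2 * ((j : ℝ) + 1) * ((g : ℝ) - (j : ℝ)) - 2 * (g : ℝ)) / (g : ℝ) * ξ j := by
    rw [Finset.mul_sum, Finset.mul_sum, ← Finset.sum_add_distrib]
    refine Finset.sum_congr rfl fun j _ => ?_
    rw [hc]; field_simp; ring
  have hid : ω2 - c * degf =
      ∑ i ∈ Finset.Icc 1 (g / 2),
        (4 * (i : ℝ) * ((g : ℝ) - (i : ℝ)) - (g : ℝ)) / (g : ℝ) * δ i
      + ∑ j ∈ Finset.Icc 1 ((g - 1) / 2),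
        (2 * ((j : ℝ) + 1) * ((g : ℝ) - (j : ℝ)) - 2 * (g : ℝ)) / (g : ℝ) * ξ j := by
    linear_combination (-1 : ℝ) * hNoether + (12 - c) * hCH + key1 + key2 + key3
  have hcoefδ : ∀ i ∈ Finset.Icc 1 (g / 2),
      0 ≤ (4 * (i : ℝ) * ((g : ℝ) - (i : ℝ)) - (g : ℝ)) / (g : ℝ) := by
    intro i hi
    rw [Finset.mem_Icc] at hi
    have h1 : (1 : ℝ) ≤ (i : ℝ) := by exact_mod_cast hi.1
    have h2n : i * 2 ≤ g := (Nat.le_div_iff_mul_le (by norm_num : 0 < 2)).mp hi.2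
    have h2 : 2 * (i : ℝ) ≤ (g : ℝ) := by
      have := (Nat.cast_le (α := ℝ)).mpr h2n
      push_cast at this; linarith
    apply div_nonneg _ (le_of_lt hg0)
    nlinarith [mul_nonneg (by linarith : (0:ℝ) ≤ (i:ℝ) - 1) (by linarith : (0:ℝ) ≤ (g:ℝ) - (i:ℝ) - 1)]
  have hcoefξ : ∀ j ∈ Finset.Icc 1 ((g - 1) / 2),
      0 ≤ (2 * ((j : ℝ) + 1) * ((g : ℝ) - (j : ℝ)) - 2 * (g : ℝ)) / (g : ℝ) := by
    intro j hj
    rw [Finset.mem_Icc] at hj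
    have h1 : (1 : ℝ) ≤ (j : ℝ) := by exact_mod_cast hj.1
    have h2n : j * 2 + 1 ≤ g := by
      have := (Nat.le_div_iff_mul_le (by norm_num : 0 < 2)).mp hj.2
      omega
    have h2 : 2 * (j : ℝ) + 1 ≤ (g : ℝ) := by
      have := (Nat.cast_le (α := ℝ)).mpr h2n
      push_cast at this; linarith
    apply div_nonneg _ (le_of_lt hg0)
    nlinarith [mul_nonneg (by linarith : (0:ℝ) ≤ (j:ℝ)) (by linarith : (0:ℝ) ≤ (g:ℝ) - (j:ℝ) - 1)]
  refine ⟨hid, hcoefδ, hcoefξ, ?_⟩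
  have hs1 : 0 ≤ ∑ i ∈ Finset.Icc 1 (g / 2),
      (4 * (i : ℝ) * ((g : ℝ) - (i : ℝ)) - (g : ℝ)) / (g : ℝ) * δ i :=
    Finset.sum_nonneg fun i hi => mul_nonneg (hcoefδ i hi) (hδ i)
  have hs2 : 0 ≤ ∑ j ∈ Finset.Icc 1 ((g - 1) / 2),
      (2 * ((j : ℝ) + 1) * ((g : ℝ) - (j : ℝ)) - 2 * (g : ℝ)) / (g : ℝ) * ξ j :=
    Finset.sum_nonneg fun j hj => mul_nonneg (hcoefξ j hj) (hξ j)
  linarith [hid]
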